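/- Let B be Lorentzian of signature (1, n−1) on V, let (e₀,…,e_{n−1}) be a pseudo-orthonormal basis, and let F be a p-form on V (1 ≤ p ≤ n−1) of type N with multiple null direction ℓ ≠ 0. Define S_F(x,y) := Σ_{a₁,…,a_{p−1}=0}^{n−1} ε_{a₁}⋯ε_{a_{p−1}} F(x, e_{a₁},…,e_{a_{p−1}}) F(y, e_{a₁},…,e_{a_{p−1}}). Then there exists a real number λ ≥ 0 such that S_F(x,y) = λ B(ℓ,x) B(ℓ,y) for all x, y ∈ V, and λ = 0 if and only if F = 0. (Hence the energy–momentum tensor (3.1) of a type N p-form takes the aligned pure-radiation form T(x,y) = (κ₀/8π) λ B(ℓ,x)B(ℓ,y), as in eqs. (3.2) and (B.8).) -/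

import Mathlib

open scoped BigOperators

/-- `ι_ℓ F = 0`: the interior product of the alternating form `F` with the vector `ℓ`
vanishes.  Since `F` is alternating, this is equivalent to saying that `F` vanishes
whenever one of its arguments equals `ℓ`. -/
def IotaZero {V : Type*} [AddCommGroup V] [Module ℝ V] {p : ℕ}
    (F : AlternatingMap ℝ V ℝ (Fin p)) (ℓ : V) : Prop :=
  ∀ v : Fin p → V, (∃ i, v i = ℓ) → F v = 0

/-- `ℓ♭ ∧ F = 0` with respect to the bilinear form `B`. -/
def WedgeFlatZero {V : Type*} [AddCommGroup V] [Module ℝ V] {p : ℕ}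
    (B : V →ₗ[ℝ] V →ₗ[ℝ] ℝ) (F : AlternatingMap ℝ V ℝ (Fin p)) (ℓ : V) : Prop :=
  ∀ v : Fin (p + 1) → V,
    ∑ i : Fin (p + 1), (-1 : ℝ) ^ (i : ℕ) * B ℓ (v i) * F (v ∘ i.succAbove) = 0

/-- `F` is of type N with multiple null direction `ℓ` (Definition 1.1). -/
def TypeN {V : Type*} [AddCommGroup V] [Module ℝ V] {p : ℕ}
    (B : V →ₗ[ℝ] V →ₗ[ℝ] ℝ) (F : AlternatingMap ℝ V ℝ (Fin p)) (ℓ : V) : Prop :=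
  IotaZero F ℓ ∧ WedgeFlatZero B F ℓ

/-- The signs `ε₀ = −1`, `ε_a = 1` for `a ≥ 1`. -/
def epsSign {n : ℕ} (a : Fin n) : ℝ := if (a : ℕ) = 0 then -1 else 1

/-- `e` is a pseudo-orthonormal basis for `B` of Lorentzian signature `(1, n−1)`. -/
def IsLorentzBasis {V : Type*} [AddCommGroup V] [Module ℝ V] {n : ℕ}
    (B : V →ₗ[ℝ] V →ₗ[ℝ] ℝ) (e : Module.Basis (Fin n) ℝ V) : Prop :=
  ∀ a b : Fin n, B (e a) (e b) = if a = b then epsSign a else 0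

/-!
Write `S(x, y) = ⟪ι_x F, ι_y F⟫` for the pairing of `p`-forms through the metric on
multi-indices. Evaluating `ι_y ι_x (ℓ♭ ∧ F) = 0` on basis vectors and pairing with `ι_z F` gives
`B(ℓ,x) S(z,y) - B(ℓ,y) S(z,x) = ±⟪ι_z F, ℓ♭ ∧ ι_y ι_x F⟫`, and the right side vanishes because
summing over the index carrying `ℓ♭` contracts `ι_z F` with `ℓ`, while `ι_ℓ F = 0`.
With the symmetry of `S` this forces `S = λ ℓ♭ ⊗ ℓ♭` as soon as `B(ℓ, e₀) ≠ 0`, which holds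
because a nonzero type N form has a null direction and a nonzero null vector has a nonzero time
component. In `S(e₀, e₀)` the terms with a repeated `e₀` vanish and the others carry only
spacelike signs, so `λ ≥ 0`; if `λ = 0` then `ι_{e₀} F = 0`, and `ι_{e₀}(ℓ♭ ∧ F) = 0` becomes
`B(ℓ, e₀) F = 0`.
-/

open Finset

lemma epsSign_mul_self {n : ℕ} (a : Fin n) : epsSign a * epsSign a = 1 := by
  unfold epsSign; split <;> norm_num

lemma epsSign_of_val_ne_zero {n : ℕ} {a : Fin n} (ha : (a : ℕ) ≠ 0) : epsSign a = 1 :=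
  if_neg ha

lemma eq_div_mul_mul_of_mul_eq_mul {α : Type*} {S : α → α → ℝ} {b : α → ℝ}
    (hsymm : ∀ x y, S x y = S y x) (h : ∀ x y z, b x * S z y = b y * S z x) {t : α}
    (ht : b t ≠ 0) (x y : α) : S x y = S t t / b t ^ 2 * (b x * b y) := by
  rw [div_mul_eq_mul_div, eq_div_iff (pow_ne_zero 2 ht)]
  linear_combination b t * h t y x + b t * b y * hsymm x t - b y * h x t t

namespace IsLorentzBasis

variable {V : Type*} [AddCommGroup V] [Module ℝ V] {n : ℕ}
  {B : V →ₗ[ℝ] V →ₗ[ℝ] ℝ} {e : Module.Basis (Fin n) ℝ V}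

lemma apply_basis (he : IsLorentzBasis B e) (v : V) (a : Fin n) :
    B v (e a) = epsSign a * e.repr v a := by
  conv_lhs => rw [← e.sum_repr v]
  simp only [map_sum, map_smul, LinearMap.sum_apply, LinearMap.smul_apply, smul_eq_mul, he _ a,
    mul_ite, mul_zero, sum_ite_eq', mem_univ, if_true]
  ring

lemma sum_smul_basis (he : IsLorentzBasis B e) (v : V) :
    ∑ c, (epsSign c * B v (e c)) • e c = v := by
  conv_rhs => rw [← e.sum_repr v]
  refine sum_congr rfl fun c _ => ?_
  rw [he.apply_basis, ← mul_assoc, epsSign_mul_self, one_mul]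

lemma apply_self (he : IsLorentzBasis B e) (v : V) :
    B v v = ∑ c, epsSign c * B v (e c) ^ 2 := by
  conv_lhs => arg 2; rw [← he.sum_smul_basis v]
  simp only [map_sum, map_smul, smul_eq_mul]
  exact sum_congr rfl fun c _ => by ring

lemma exists_timelike_apply_ne_zero (he : IsLorentzBasis B e) {ℓ : V} (hℓ : ℓ ≠ 0)
    (hnull : B ℓ ℓ = 0) : ∃ t : Fin n, (t : ℕ) = 0 ∧ B ℓ (e t) ≠ 0 := by
  by_contra! htime
  have hsq : ∀ c, epsSign c * B ℓ (e c) ^ 2 = B ℓ (e c) ^ 2 := fun c => by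
    by_cases hc : (c : ℕ) = 0
    · simp [htime c hc]
    · rw [epsSign_of_val_ne_zero hc, one_mul]
  have hzero : ∀ c, B ℓ (e c) = 0 := by
    have := he.apply_self ℓ
    simp only [hsq, hnull] at this
    intro c
    exact pow_eq_zero_iff two_ne_zero |>.mp <|
      (sum_eq_zero_iff_of_nonneg fun c _ => sq_nonneg _).mp this.symm c (mem_univ c)
  exact hℓ <| by simpa [hzero] using (he.sum_smul_basis ℓ).symm

end IsLorentzBasis

noncomputable def contractedSquare {V : Type*} [AddCommGroup V] [Module ℝ V] {n p : ℕ}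
    (e : Module.Basis (Fin n) ℝ V) (F : V [⋀^Fin (p + 1)]→ₗ[ℝ] ℝ) (x y : V) : ℝ :=
  ∑ a : Fin p → Fin n, (∏ i, epsSign (a i)) *
    (F (Fin.cons x (fun i => e (a i))) * F (Fin.cons y (fun i => e (a i))))

section Forms

variable {V : Type*} [AddCommGroup V] [Module ℝ V] {n p : ℕ}
  {B : V →ₗ[ℝ] V →ₗ[ℝ] ℝ} {e : Module.Basis (Fin n) ℝ V} {ℓ : V}

lemma IotaZero.curryLeft {F : V [⋀^Fin (p + 1)]→ₗ[ℝ] ℝ} (h : IotaZero F ℓ) (z : V) :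
    IotaZero (F.curryLeft z) ℓ := fun u ⟨i, hi⟩ => by
  rw [AlternatingMap.curryLeft_apply_apply]
  exact h _ ⟨i.succ, by simpa using hi⟩

lemma IotaZero.sum_apply_update_basis (he : IsLorentzBasis B e)
    {ω : V [⋀^Fin p]→ₗ[ℝ] ℝ} (hω : IotaZero ω ℓ) (u : Fin p → V) (i : Fin p) :
    ∑ c, epsSign c * B ℓ (e c) * ω (Function.update u i (e c)) = 0 := by
  simp_rw [← smul_eq_mul (epsSign _ * _), ← ω.map_update_smul, ← ω.map_update_sum,
    he.sum_smul_basis]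
  exact hω _ ⟨i, Function.update_self ..⟩

lemma IotaZero.sum_basis_mul_eq_zero (he : IsLorentzBasis B e)
    {ω : V [⋀^Fin p]→ₗ[ℝ] ℝ} (hω : IotaZero ω ℓ) (i : Fin p) (G : (Fin p → V) → ℝ)
    (hG : ∀ u v, G (Function.update u i v) = G u) :
    ∑ a : Fin p → Fin n, (∏ k, epsSign (a k)) * B ℓ (e (a i)) * G (fun k => e (a k)) *
      ω (fun k => e (a k)) = 0 := by
  cases p with
  | zero => exact i.elim0
  | succ m =>
    rw [← (Fin.insertNthEquiv (fun _ => Fin n) i).sum_comp, Fintype.sum_prod_type_right]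
    refine sum_eq_zero fun b _ => ?_
    set u : Fin (m + 1) → V := i.insertNth 0 (fun k => e (b k))
    have hu : ∀ c, (fun k => e (i.insertNth c b k)) = Function.update u i (e c) := fun c => by
      rw [Fin.update_insertNth, Fin.eq_insertNth_iff]
      exact ⟨by simp, by ext k; simp [Fin.removeNth]⟩
    calc _ = (∏ k, epsSign (b k)) * G u *
          ∑ c, epsSign c * B ℓ (e c) * ω (Function.update u i (e c)) := by
          rw [mul_sum]
          refine sum_congr rfl fun c _ => ?_
          simp only [Fin.insertNthEquiv_apply, hu, hG, Fin.prod_univ_succAbove _ i,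
            Fin.insertNth_apply_same, Fin.insertNth_apply_succAbove]
          ring
      _ = 0 := by rw [hω.sum_apply_update_basis he, mul_zero]

lemma WedgeFlatZero.cons_cons {F : V [⋀^Fin (p + 1)]→ₗ[ℝ] ℝ}
    (h : WedgeFlatZero B F ℓ) (x y : V) (u : Fin p → V) :
    B ℓ x * F (Fin.cons y u) - B ℓ y * F (Fin.cons x u) +
      ∑ i : Fin p, (-1) ^ (i : ℕ) * B ℓ (u i) *
        F (Fin.cons x (i.succ.removeNth (Fin.cons y u : Fin (p + 1) → V))) = 0 := by
  have := h (Fin.cons x (Fin.cons y u))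
  have hskip : (Fin.cons x (Fin.cons y u) : Fin (p + 2) → V) ∘ Fin.succAbove 1 = Fin.cons x u := by
    ext k; cases k using Fin.cases <;> simp
  rw [Fin.sum_univ_succ, Fin.sum_univ_succ] at this
  simpa [hskip, pow_succ, sub_eq_add_neg, add_assoc] using this

lemma contractedSquare_comm (F : V [⋀^Fin (p + 1)]→ₗ[ℝ] ℝ) (x y : V) :
    contractedSquare e F x y = contractedSquare e F y x :=
  sum_congr rfl fun _ _ => by ring

lemma TypeN.mul_contractedSquare_comm (he : IsLorentzBasis B e)
    {F : V [⋀^Fin (p + 1)]→ₗ[ℝ] ℝ} (hN : TypeN B F ℓ) (x y z : V) :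
    B ℓ x * contractedSquare e F z y = B ℓ y * contractedSquare e F z x := by
  obtain ⟨hι, hwedge⟩ := hN
  set G : Fin p → (Fin p → V) → ℝ := fun i u =>
    F (Fin.cons x (i.succ.removeNth (Fin.cons y u : Fin (p + 1) → V)))
  have hG : ∀ i u v, G i (Function.update u i v) = G i u := fun i u v => by
    simp only [G, Fin.cons_update, Fin.removeNth_update]
  have hcontract : ∑ a : Fin p → Fin n, (∏ k, epsSign (a k)) * F (Fin.cons z fun k => e (a k)) *
      ∑ i : Fin p, (-1) ^ (i : ℕ) * B ℓ (e (a i)) * G i (fun k => e (a k)) = 0 := by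
    simp_rw [mul_sum]
    rw [sum_comm]
    refine sum_eq_zero fun i _ => ?_
    have := (hι.curryLeft z).sum_basis_mul_eq_zero he i (G i) (hG i)
    rw [← mul_zero ((-1 : ℝ) ^ (i : ℕ)), ← this, mul_sum]
    refine sum_congr rfl fun a _ => ?_
    simp only [AlternatingMap.curryLeft_apply_apply, Matrix.vecCons]
    ring
  unfold contractedSquare
  rw [mul_sum, mul_sum, ← sub_eq_zero, ← sum_sub_distrib, ← neg_eq_zero, ← hcontract,
    ← sum_neg_distrib]
  refine sum_congr rfl fun a _ => ?_
  linear_combination -(∏ k, epsSign (a k)) * F (Fin.cons z fun k => e (a k)) *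
    hwedge.cons_cons x y (fun k => e (a k))

lemma WedgeFlatZero.mul_eq_zero_of_cons_eq_zero {F : V [⋀^Fin (p + 1)]→ₗ[ℝ] ℝ}
    (h : WedgeFlatZero B F ℓ) {w : V} (hw : ∀ u, F (Fin.cons w u) = 0)
    (u : Fin (p + 1) → V) : B ℓ w * F u = 0 := by
  simpa [Fin.sum_univ_succ, Fin.removeNth, hw] using h (Fin.cons w u)

lemma WedgeFlatZero.eq_zero_of_curryLeft_eq_zero {F : V [⋀^Fin (p + 1)]→ₗ[ℝ] ℝ}
    (h : WedgeFlatZero B F ℓ) {w : V} (hw : B ℓ w ≠ 0) (hι : F.curryLeft w = 0) : F = 0 := by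
  refine AlternatingMap.ext fun u => (mul_eq_zero.mp (h.mul_eq_zero_of_cons_eq_zero
    (fun u => ?_) u)).resolve_left hw
  simpa [Matrix.vecCons] using congr($hι u)

lemma TypeN.apply_self_eq_zero {F : V [⋀^Fin (p + 1)]→ₗ[ℝ] ℝ} (hN : TypeN B F ℓ)
    (hF : F ≠ 0) : B ℓ ℓ = 0 := by
  obtain ⟨u, hu⟩ : ∃ u, F u ≠ 0 := by
    by_contra! h
    exact hF (AlternatingMap.ext h)
  exact (mul_eq_zero.mp (hN.2.mul_eq_zero_of_cons_eq_zero
    (fun u => hN.1 _ ⟨0, rfl⟩) u)).resolve_right hu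

lemma contractedSquare_timelike_self (F : V [⋀^Fin (p + 1)]→ₗ[ℝ] ℝ) {t : Fin n}
    (ht : (t : ℕ) = 0) :
    contractedSquare e F (e t) (e t) =
      ∑ a : Fin p → Fin n, F (Fin.cons (e t) fun k => e (a k)) ^ 2 := by
  refine sum_congr rfl fun a _ => ?_
  by_cases hrep : ∃ k, a k = t
  · obtain ⟨k, hk⟩ := hrep
    have hzero : F (Fin.cons (e t) fun k => e (a k)) = 0 :=
      F.map_eq_zero_of_eq _ (i := 0) (j := k.succ) (by simp [hk]) (Fin.succ_ne_zero k).symm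
    simp [hzero]
  · simp only [not_exists] at hrep
    have hsign : ∏ k, epsSign (a k) = 1 := prod_eq_one fun k _ =>
      epsSign_of_val_ne_zero fun hk => hrep k (Fin.ext (hk.trans ht.symm))
    rw [hsign, one_mul, sq]

lemma contractedSquare_timelike_self_nonneg (F : V [⋀^Fin (p + 1)]→ₗ[ℝ] ℝ)
    {t : Fin n} (ht : (t : ℕ) = 0) : 0 ≤ contractedSquare e F (e t) (e t) := by
  rw [contractedSquare_timelike_self F ht]
  positivity

lemma curryLeft_eq_zero_of_contractedSquare_timelike_self
    {F : V [⋀^Fin (p + 1)]→ₗ[ℝ] ℝ} {t : Fin n} (ht : (t : ℕ) = 0)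
    (h : contractedSquare e F (e t) (e t) = 0) : F.curryLeft (e t) = 0 := by
  rw [contractedSquare_timelike_self F ht, sum_eq_zero_iff_of_nonneg fun _ _ => sq_nonneg _] at h
  refine e.ext_alternating fun a _ => ?_
  simpa [Matrix.vecCons] using h a (mem_univ a)

end Forms

theorem typeN_energy_momentum_pure_radiation_general {V : Type*} [AddCommGroup V] [Module ℝ V]
    {n : ℕ}
    (B : V →ₗ[ℝ] V →ₗ[ℝ] ℝ)
    (e : Module.Basis (Fin n) ℝ V) (he : IsLorentzBasis B e)
    {p : ℕ}
    (F : AlternatingMap ℝ V ℝ (Fin (p + 1)))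
    {ℓ : V} (hℓ : ℓ ≠ 0) (hN : TypeN B F ℓ) :
    ∃ lam : ℝ, 0 ≤ lam ∧
      (∀ x y : V,
        ∑ a : Fin p → Fin n, (∏ i : Fin p, epsSign (a i)) *
          (F (Fin.cons x (fun i => e (a i))) * F (Fin.cons y (fun i => e (a i)))) =
        lam * (B ℓ x * B ℓ y)) ∧
      (lam = 0 ↔ F = 0) := by
  by_cases hF : F = 0
  · exact ⟨0, le_rfl, fun x y => by simp [hF], by simp [hF]⟩
  obtain ⟨t, ht, hℓt⟩ := he.exists_timelike_apply_ne_zero hℓ (hN.apply_self_eq_zero hF)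
  refine ⟨contractedSquare e F (e t) (e t) / B ℓ (e t) ^ 2,
    div_nonneg (contractedSquare_timelike_self_nonneg F ht) (sq_nonneg _),
    eq_div_mul_mul_of_mul_eq_mul (contractedSquare_comm F) (hN.mul_contractedSquare_comm he) hℓt,
    fun hlam => ?_, fun h => absurd h hF⟩
  have hS : contractedSquare e F (e t) (e t) = 0 := by
    simpa [hℓt] using hlam
  exact hN.2.eq_zero_of_curryLeft_eq_zero hℓt
    (curryLeft_eq_zero_of_contractedSquare_timelike_self ht hS)

/-- for a type N `(p+1)`-form `F` (i.e. a `p`-form with `p ≥ 1`, written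
here with arity `p + 1`, `p + 1 ≤ n − 1`), the once-contracted square
`S_F(x,y) = Σ ε_{a₁}⋯ε_{a_p} F(x, e_{a₁},…,e_{a_p}) F(y, e_{a₁},…,e_{a_p})`
equals `λ B(ℓ,x) B(ℓ,y)` for some `λ ≥ 0`, with `λ = 0` iff `F = 0`
(aligned pure-radiation energy–momentum, eqs. (3.1), (3.2), (B.8)). -/
theorem typeN_energy_momentum_pure_radiation {V : Type*} [AddCommGroup V] [Module ℝ V]
    [FiniteDimensional ℝ V] {n : ℕ}
    (B : V →ₗ[ℝ] V →ₗ[ℝ] ℝ)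
    (e : Module.Basis (Fin n) ℝ V) (he : IsLorentzBasis B e)
    {p : ℕ} (hpn : p + 1 ≤ n - 1)
    (F : AlternatingMap ℝ V ℝ (Fin (p + 1)))
    {ℓ : V} (hℓ : ℓ ≠ 0) (hN : TypeN B F ℓ) :
    ∃ lam : ℝ, 0 ≤ lam ∧
      (∀ x y : V,
        ∑ a : Fin p → Fin n, (∏ i : Fin p, epsSign (a i)) *
          (F (Fin.cons x (fun i => e (a i))) * F (Fin.cons y (fun i => e (a i)))) =
        lam * (B ℓ x * B ℓ y)) ∧
      (lam = 0 ↔ F = 0) :=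
  typeN_energy_momentum_pure_radiation_general B e he F hℓ hN
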